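/- Let S = ⟨a_0,…,a_g⟩ be a numerical semigroup that is free for the arrangement (a_0,…,a_g). Then the conductor of S is c(S) = Σ_{i=1}^{g} (n_i − 1)·a_i − a_0 + 1. -/

import Mathlib

/-- `eSeq a i = gcd(a 0, …, a i)`. -/
def eSeq (a : ℕ → ℕ) : ℕ → ℕ
  | 0 => a 0
  | i + 1 => Nat.gcd (eSeq a i) (a (i + 1))

/-- `nSeq a i = e_{i-1} / e_i` (intended for `1 ≤ i`). -/
def nSeq (a : ℕ → ℕ) (i : ℕ) : ℕ := eSeq a (i - 1) / eSeq a i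

/-- `gen a i = ⟨a 0, …, a i⟩`, the set of all ℕ-linear combinations. -/
def gen (a : ℕ → ℕ) (i : ℕ) : Set ℕ :=
  {s | ∃ c : ℕ → ℕ, s = ∑ j ∈ Finset.range (i + 1), c j * a j}

/-- The semigroup `S = ⟨a 0, …, a g⟩` is free for the arrangement `(a 0, …, a g)`. -/
def IsFreeArr (a : ℕ → ℕ) (g : ℕ) : Prop :=
  eSeq a g = 1 ∧ ∀ i, 1 ≤ i → i ≤ g → nSeq a i * a i ∈ gen a (i - 1)

/-- The conductor of a set `T ⊆ ℕ`: the least `c` with `c + ℕ ⊆ T`. -/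
noncomputable def conductorOf (T : Set ℕ) : ℕ := sInf {c : ℕ | ∀ m, c ≤ m → m ∈ T}

/-!
Write `F k = ∑_{i=1}^{k} (n_i - 1) a_i - a_0` (`freeFrobenius a k`). By induction on `k`,
`F k` is the largest multiple of `e_k` outside `⟨a_0, …, a_k⟩`. A multiple `m > F (k+1)` of `e_{k+1}` is congruent modulo
`e_k` to `c a_{k+1}` for a unique `0 ≤ c < n_{k+1}`, because `a_{k+1} / e_{k+1}` is a unit
modulo `n_{k+1}`; then `m - c a_{k+1} > F k` is a multiple of `e_k`. Conversely, in any
expression `F (k+1) = s + d a_{k+1}` with `s ∈ ⟨a_0, …, a_k⟩` the same congruence forces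
`d = (n_{k+1} - 1) + q n_{k+1}` with `q ≥ 0`, and freeness puts `s + q n_{k+1} a_{k+1} = F k`
into `⟨a_0, …, a_k⟩`. For `k = g` we have `e_g = 1`, so the conductor is `F g + 1`.
-/

lemma conductorOf_eq_of_mem_of_not_mem {T : Set ℕ} {c : ℕ} (hmem : ∀ m, c ≤ m → m ∈ T)
    (hgap : ∀ m, m + 1 = c → m ∉ T) : conductorOf T = c := by
  refine le_antisymm (Nat.sInf_le hmem) (le_csInf ⟨c, hmem⟩ fun b hb => ?_)
  by_contra! hbc
  exact hgap (c - 1) (by omega) (hb _ (by omega))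

section Gen

variable (a : ℕ → ℕ)

lemma add_mem_gen {k s t : ℕ} (hs : s ∈ gen a k) (ht : t ∈ gen a k) : s + t ∈ gen a k := by
  obtain ⟨c, rfl⟩ := hs
  obtain ⟨d, rfl⟩ := ht
  exact ⟨c + d, by simp only [Pi.add_apply, add_mul, Finset.sum_add_distrib]⟩

lemma mul_mem_gen {k s : ℕ} (n : ℕ) (hs : s ∈ gen a k) : n * s ∈ gen a k := by
  obtain ⟨c, rfl⟩ := hs
  exact ⟨n • c, by simp only [Finset.mul_sum, Pi.smul_apply, smul_eq_mul, mul_assoc]⟩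

lemma mem_gen_zero_iff {s : ℕ} : s ∈ gen a 0 ↔ a 0 ∣ s := by
  simp only [gen, zero_add, Finset.sum_range_one, Set.mem_ofPred_eq]
  constructor
  · rintro ⟨c, rfl⟩
    exact dvd_mul_left _ _
  · rintro ⟨q, rfl⟩
    exact ⟨fun _ => q, mul_comm _ _⟩

lemma mem_gen_succ_iff {k s : ℕ} :
    s ∈ gen a (k + 1) ↔ ∃ t ∈ gen a k, ∃ d, s = t + d * a (k + 1) := by
  constructor
  · rintro ⟨c, rfl⟩
    exact ⟨_, ⟨c, rfl⟩, c (k + 1), Finset.sum_range_succ _ _⟩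
  · rintro ⟨_, ⟨c, rfl⟩, d, rfl⟩
    refine ⟨Function.update c (k + 1) d, ?_⟩
    rw [Finset.sum_range_succ (fun j => Function.update c (k + 1) d j * a j),
      Function.update_self]
    congr 1
    refine Finset.sum_congr rfl fun j hj => ?_
    rw [Function.update_of_ne (by have := Finset.mem_range.mp hj; omega)]

end Gen

section Sequences

variable {a : ℕ → ℕ}

lemma eSeq_succ_dvd (k : ℕ) : eSeq a (k + 1) ∣ eSeq a k := Nat.gcd_dvd_left _ _

lemma eSeq_succ_dvd_a (k : ℕ) : eSeq a (k + 1) ∣ a (k + 1) := Nat.gcd_dvd_right _ _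

lemma eSeq_pos (h0 : 0 < a 0) : ∀ k, 0 < eSeq a k
  | 0 => h0
  | k + 1 => Nat.gcd_pos_of_pos_left _ (eSeq_pos h0 k)

lemma nSeq_succ_mul_eSeq (k : ℕ) : nSeq a (k + 1) * eSeq a (k + 1) = eSeq a k :=
  Nat.div_mul_cancel (eSeq_succ_dvd k)

lemma nSeq_succ_pos (h0 : 0 < a 0) (k : ℕ) : 0 < nSeq a (k + 1) :=
  Nat.div_pos (Nat.le_of_dvd (eSeq_pos h0 k) (eSeq_succ_dvd k)) (eSeq_pos h0 (k + 1))

lemma eSeq_dvd_of_mem_gen {k s : ℕ} (hs : s ∈ gen a k) : eSeq a k ∣ s := by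
  induction k generalizing s with
  | zero => exact (mem_gen_zero_iff a).mp hs
  | succ k ih =>
    obtain ⟨t, ht, d, rfl⟩ := (mem_gen_succ_iff a).mp hs
    exact dvd_add ((eSeq_succ_dvd k).trans (ih ht)) ((eSeq_succ_dvd_a k).mul_left d)

lemma eSeq_dvd_mul_a_succ_iff (h0 : 0 < a 0) (k : ℕ) (x : ℤ) :
    (eSeq a k : ℤ) ∣ x * a (k + 1) ↔ (nSeq a (k + 1) : ℤ) ∣ x := by
  have hcop : IsCoprime (nSeq a (k + 1) : ℤ) (a (k + 1) / eSeq a (k + 1) : ℕ) :=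
    Nat.isCoprime_iff_coprime.mpr
      (Nat.coprime_div_gcd_div_gcd (m := eSeq a k) (eSeq_pos h0 (k + 1)))
  have ha : (a (k + 1) : ℤ) = (a (k + 1) / eSeq a (k + 1) : ℕ) * eSeq a (k + 1) := by
    exact_mod_cast (Nat.div_mul_cancel (eSeq_succ_dvd_a k)).symm
  have he : (eSeq a k : ℤ) = nSeq a (k + 1) * eSeq a (k + 1) := by
    exact_mod_cast (nSeq_succ_mul_eSeq k).symm
  have he0 : (eSeq a (k + 1) : ℤ) ≠ 0 := by exact_mod_cast (eSeq_pos h0 (k + 1)).ne'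
  rw [ha, he, ← mul_assoc, mul_dvd_mul_iff_right he0]
  exact ⟨hcop.dvd_of_dvd_mul_right, fun h => h.mul_right _⟩

lemma exists_eSeq_dvd_sub_mul_a_succ {k m : ℕ} (hm : eSeq a (k + 1) ∣ m) :
    ∃ y : ℤ, (eSeq a k : ℤ) ∣ m - y * a (k + 1) := by
  obtain ⟨t, rfl⟩ := hm
  refine ⟨t * Nat.gcdB (eSeq a k) (a (k + 1)), t * Nat.gcdA (eSeq a k) (a (k + 1)), ?_⟩
  have hbez := Nat.gcd_eq_gcd_ab (eSeq a k) (a (k + 1))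
  change ((eSeq a (k + 1) : ℕ) : ℤ) = _ at hbez
  push_cast
  rw [hbez]
  ring

end Sequences

/-- For a free arrangement, the largest multiple of `eSeq a k` outside `gen a k`. -/
def freeFrobenius (a : ℕ → ℕ) (k : ℕ) : ℤ :=
  (∑ i ∈ Finset.Icc 1 k, ((nSeq a i : ℤ) - 1) * (a i : ℤ)) - (a 0 : ℤ)

section Frobenius

variable {a : ℕ → ℕ}

lemma freeFrobenius_zero : freeFrobenius a 0 = -a 0 := by simp [freeFrobenius]

lemma freeFrobenius_succ (k : ℕ) :
    freeFrobenius a (k + 1) = freeFrobenius a k + ((nSeq a (k + 1) : ℤ) - 1) * a (k + 1) := by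
  rw [freeFrobenius, freeFrobenius, Finset.sum_Icc_succ_top (by omega)]
  ring

lemma eSeq_dvd_freeFrobenius (k : ℕ) : (eSeq a k : ℤ) ∣ freeFrobenius a k := by
  induction k with
  | zero => simp [freeFrobenius_zero, eSeq]
  | succ k ih =>
    rw [freeFrobenius_succ]
    exact dvd_add ((Int.natCast_dvd_natCast.mpr (eSeq_succ_dvd k)).trans ih)
      ((Int.natCast_dvd_natCast.mpr (eSeq_succ_dvd_a k)).mul_left _)

lemma neg_eSeq_le_freeFrobenius {k : ℕ} (hpos : ∀ i ≤ k, 0 < a i) :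
    -(eSeq a k : ℤ) ≤ freeFrobenius a k := by
  induction k with
  | zero => simp [freeFrobenius_zero, eSeq]
  | succ k ih =>
    have h0 := hpos 0 (Nat.zero_le _)
    have hn : (1 : ℤ) ≤ nSeq a (k + 1) := by exact_mod_cast nSeq_succ_pos h0 k
    have hea : (eSeq a (k + 1) : ℤ) ≤ a (k + 1) := by
      exact_mod_cast Nat.le_of_dvd (hpos _ le_rfl) (eSeq_succ_dvd_a k)
    have he : (eSeq a k : ℤ) = nSeq a (k + 1) * eSeq a (k + 1) := by
      exact_mod_cast (nSeq_succ_mul_eSeq k).symm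
    rw [freeFrobenius_succ]
    nlinarith [ih fun i hi => hpos i (by omega), mul_le_mul_of_nonneg_left hea (sub_nonneg.mpr hn)]

lemma mem_gen_of_freeFrobenius_lt {k : ℕ} (hpos : ∀ i ≤ k, 0 < a i) {m : ℕ}
    (hdvd : eSeq a k ∣ m) (hm : freeFrobenius a k < m) : m ∈ gen a k := by
  induction k generalizing m with
  | zero => exact (mem_gen_zero_iff a).mpr hdvd
  | succ k ih =>
    have h0 := hpos 0 (Nat.zero_le _)
    have hn : (0 : ℤ) < nSeq a (k + 1) := by exact_mod_cast nSeq_succ_pos h0 k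
    obtain ⟨c, hc0, hcn, hdvd'⟩ : ∃ c : ℤ, 0 ≤ c ∧ c < nSeq a (k + 1) ∧
        (eSeq a k : ℤ) ∣ m - c * a (k + 1) := by
      obtain ⟨y, hy⟩ := exists_eSeq_dvd_sub_mul_a_succ hdvd
      refine ⟨y % nSeq a (k + 1), Int.emod_nonneg _ hn.ne', Int.emod_lt_of_pos _ hn, ?_⟩
      rw [show (m : ℤ) - y % nSeq a (k + 1) * a (k + 1)
          = m - y * a (k + 1) + (y - y % nSeq a (k + 1)) * a (k + 1) by ring]
      exact dvd_add hy ((eSeq_dvd_mul_a_succ_iff h0 k _).mpr Int.dvd_self_sub_emod)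
    have hlt : freeFrobenius a k < m - c * a (k + 1) := by
      rw [freeFrobenius_succ] at hm
      nlinarith
    have hnonneg : 0 ≤ (m : ℤ) - c * a (k + 1) := by
      by_contra! hneg
      have := Int.le_of_dvd (by omega) hdvd'.neg_right
      linarith [neg_eSeq_le_freeFrobenius fun i (hi : i ≤ k) => hpos i (by omega)]
    lift c to ℕ using hc0
    obtain ⟨t, ht⟩ : ∃ t : ℕ, (t : ℤ) = m - c * a (k + 1) := ⟨_, Int.toNat_of_nonneg hnonneg⟩
    have htmem : t ∈ gen a k :=
      ih (fun i hi => hpos i (by omega)) (Int.natCast_dvd_natCast.mp (ht ▸ hdvd')) (ht ▸ hlt)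
    exact (mem_gen_succ_iff a).mpr ⟨t, htmem, c, by omega⟩

lemma freeFrobenius_not_mem_gen {k : ℕ} (h0 : 0 < a 0)
    (hfree : ∀ i, 1 ≤ i → i ≤ k → nSeq a i * a i ∈ gen a (i - 1)) {s : ℕ} (hs : s ∈ gen a k) :
    (s : ℤ) ≠ freeFrobenius a k := by
  induction k generalizing s with
  | zero => rw [freeFrobenius_zero]; omega
  | succ k ih =>
    intro hF
    obtain ⟨t, ht, d, rfl⟩ := (mem_gen_succ_iff a).mp hs
    have hn : (0 : ℤ) < nSeq a (k + 1) := by exact_mod_cast nSeq_succ_pos h0 k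
    obtain ⟨q, hq⟩ : (nSeq a (k + 1) : ℤ) ∣ d - (nSeq a (k + 1) - 1) := by
      refine (eSeq_dvd_mul_a_succ_iff h0 k _).mp ?_
      have hdiff : ((d : ℤ) - (nSeq a (k + 1) - 1)) * a (k + 1) = freeFrobenius a k - t := by
        rw [freeFrobenius_succ] at hF
        push_cast at hF
        linear_combination hF
      rw [hdiff]
      exact dvd_sub (eSeq_dvd_freeFrobenius k)
        (Int.natCast_dvd_natCast.mpr (eSeq_dvd_of_mem_gen ht))
    have hq0 : 0 ≤ q := by nlinarith
    lift q to ℕ using hq0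
    have hmem : t + q * (nSeq a (k + 1) * a (k + 1)) ∈ gen a k :=
      add_mem_gen a ht (mul_mem_gen a q (hfree (k + 1) (by omega) le_rfl))
    refine ih (fun i hi hik => hfree i hi (by omega)) hmem ?_
    rw [freeFrobenius_succ] at hF
    push_cast at hF ⊢
    linear_combination hF - (a (k + 1) : ℤ) * hq

end Frobenius

theorem stmt_8 (g : ℕ) (a : ℕ → ℕ) (hpos : ∀ i, i ≤ g → 0 < a i)
    (hfree : IsFreeArr a g) :
    (conductorOf (gen a g) : ℤ) =
      (∑ i ∈ Finset.Icc 1 g, ((nSeq a i : ℤ) - 1) * (a i : ℤ)) - (a 0 : ℤ) + 1 := by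
  obtain ⟨he, hfree⟩ := hfree
  have hF : -1 ≤ freeFrobenius a g := by
    simpa [he] using neg_eSeq_le_freeFrobenius hpos
  obtain ⟨c, hc⟩ : ∃ c : ℕ, (c : ℤ) = freeFrobenius a g + 1 :=
    ⟨_, Int.toNat_of_nonneg (by omega)⟩
  have hcond : conductorOf (gen a g) = c := by
    refine conductorOf_eq_of_mem_of_not_mem (fun m hm => ?_) (fun m hm hmem => ?_)
    · exact mem_gen_of_freeFrobenius_lt hpos (by simp [he]) (by omega)
    · exact freeFrobenius_not_mem_gen (hpos 0 (Nat.zero_le g)) hfree hmem (by omega)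
  rw [hcond, hc, freeFrobenius]
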